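/- arXiv:1509.07898 — 2 statements merged into one kernel-verified Lean document; each statement's English description precedes it below -/
import Mathlib

section
/- For a natural number m ≥ 0, there exist k ≥ 1 and natural numbers 0 ≤ n_1 ≤ n_2 ≤ ... ≤ n_k such that F_{n_1}·F_{n_2}·...·F_{n_k} − 1 = L_m^2 if and only if m = 1 or m is even. -/
/-!
For odd `m` one has `L_m² + 1 = L_{2m} - 1`. In any commutative ring in which `L_{2m} = 1`, the
matrix `X = Q^{2m}`, `Q = !![1, 1; 1, 0]`, has trace `1` and determinant `1`, so `X² = X - 1` and
`X⁶ = 1`. If moreover `F_j = 0`, then `Q^j` is a scalar whose square is `±1`, so `X^{4j} = 1`; were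
`3 ∤ j`, this would force `X² = 1`, i.e. `X = 2`, i.e. `3 = 0`. Working modulo a factor `F_n ≠ 1`
of `L_m² + 1`, a number prime to `3`, this gives `3 ∣ n`, so `F_n` is even. Since
`4 ∤ L_m² + 1`, the product then collapses to a single Fibonacci number, which is impossible because
`L_{2m} - 1` lies strictly between `F_{2m+1}` and `F_{2m+2}`.

For even `m = n + 1` (so `n` odd), Cassini's identity gives `L_m² + 1 = 5 F_n F_{n+2} = F_5 F_n F_{n+2}`.
-/

def lucas : ℕ → ℕ
  | 0 => 2
  | 1 => 1
  | n + 2 => lucas (n + 1) + lucas n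

open Nat Matrix

lemma lucas_succ (n : ℕ) : lucas (n + 1) = fib n + fib (n + 2) := by
  induction n using Nat.twoStepInduction with
  | zero => rfl
  | one => rfl
  | more n ih₁ ih₂ =>
    rw [show lucas (n + 3) = lucas (n + 2) + lucas (n + 1) from rfl, ih₁, ih₂]
    simp only [fib_add_two]
    ring

lemma fib_mul_fib_add_two (n : ℕ) :
    (fib n * fib (n + 2) : ℤ) = fib (n + 1) ^ 2 - (-1) ^ n := by
  have h := Int.fib_succ_mul_fib_pred_sub_fib_sq (n + 1 : ℕ)
  rw [Int.natAbs_natCast, Nat.cast_add_one, add_sub_cancel_right, ← Nat.cast_add_one,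
    ← Nat.cast_add_one, Int.fib_natCast, Int.fib_natCast, Int.fib_natCast] at h
  linear_combination h

lemma lucas_sq (n : ℕ) : (lucas n ^ 2 : ℤ) = 5 * fib n ^ 2 + 4 * (-1) ^ n := by
  cases n with
  | zero => rfl
  | succ n =>
    have h := fib_mul_fib_add_two n
    rw [lucas_succ, pow_succ]
    push_cast [fib_add_two] at h ⊢
    linear_combination 4 * h

lemma lucas_two_mul (n : ℕ) : (lucas (2 * n) : ℤ) = lucas n ^ 2 - 2 * (-1) ^ n := by
  cases n with
  | zero => rfl
  | succ n =>
    rw [show 2 * (n + 1) = 2 * n + 1 + 1 by ring, lucas_succ, lucas_succ,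
      show 2 * n + 1 + 2 = 2 * (n + 1) + 1 by ring, fib_two_mul_add_one, fib_two_mul_add_one,
      show n + 1 + 1 = n + 2 from rfl, pow_succ]
    push_cast
    linear_combination -2 * fib_mul_fib_add_two n

lemma lucas_sq_add_one_eq_five_mul_fib_mul_fib {n : ℕ} (hn : Odd n) :
    lucas (n + 1) ^ 2 + 1 = 5 * fib n * fib (n + 2) := by
  have hL := lucas_sq (n + 1)
  have hF := fib_mul_fib_add_two n
  rw [hn.add_one.neg_one_pow] at hL
  rw [hn.neg_one_pow] at hF
  zify
  linear_combination hL - 5 * hF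

lemma lucas_sub_one_ne_fib {n : ℕ} (hn : 4 ≤ n) (k : ℕ) : lucas n - 1 ≠ fib k := by
  obtain ⟨n, rfl⟩ : ∃ i, n = i + 1 := ⟨n - 1, by omega⟩
  have hfib : 2 ≤ fib n := fib_mono (show 3 ≤ n by omega)
  have hlow : fib (n + 2) < lucas (n + 1) - 1 := by
    rw [lucas_succ]
    omega
  have hhigh : lucas (n + 1) - 1 < fib (n + 3) := by
    rw [lucas_succ, fib_add_two (n := n + 1), fib_add_two (n := n)]
    have := fib_le_fib_succ (n := n)
    omega
  intro hk
  rcases le_or_gt k (n + 2) with h | h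
  · exact absurd (fib_mono h) (by omega)
  · exact absurd (fib_mono (show n + 3 ≤ k by omega)) (by omega)

section FibMatrix

variable {R : Type*} [CommRing R]

theorem Matrix.sq_eq_trace_smul_sub_det_smul (A : Matrix (Fin 2) (Fin 2) R) :
    A ^ 2 = A.trace • A - A.det • 1 := by
  ext i j
  fin_cases i <;> fin_cases j <;> simp [sq, mul_apply, trace_fin_two, det_fin_two] <;> ring

theorem Matrix.sq_eq_sub_one_of_trace_eq_one_of_det_eq_one {A : Matrix (Fin 2) (Fin 2) R}
    (htr : A.trace = 1) (hdet : A.det = 1) : A ^ 2 = A - 1 := by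
  rw [sq_eq_trace_smul_sub_det_smul, htr, hdet, one_smul, one_smul]

variable (R) in
def fibMatrix : Matrix (Fin 2) (Fin 2) R := !![1, 1; 1, 0]

lemma fibMatrix_pow_succ (n : ℕ) :
    fibMatrix R ^ (n + 1) = !![(fib (n + 2) : R), fib (n + 1); fib (n + 1), fib n] := by
  induction n with
  | zero => simp [fibMatrix]
  | succ n ih =>
    rw [pow_succ, ih, fibMatrix, mul_fin_two]
    ext i j
    fin_cases i <;> fin_cases j <;> simp [fib_add_two] <;> ring

lemma det_fibMatrix : (fibMatrix R).det = -1 := by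
  simp [fibMatrix, det_fin_two_of]

lemma trace_fibMatrix_pow (n : ℕ) : (fibMatrix R ^ n).trace = lucas n := by
  cases n with
  | zero => simp [lucas]
  | succ n =>
    rw [fibMatrix_pow_succ, trace_fin_two_of, lucas_succ]
    push_cast
    ring

lemma fibMatrix_pow_four_mul_eq_one {j : ℕ} (hj : (fib j : R) = 0) :
    fibMatrix R ^ (4 * j) = 1 := by
  cases j with
  | zero => simp
  | succ j =>
    have hscalar : fibMatrix R ^ (j + 1) = (fib j : R) • 1 := by
      rw [fibMatrix_pow_succ, hj, fib_add_two, Nat.cast_add, hj, add_zero]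
      ext i k
      fin_cases i <;> fin_cases k <;> simp
    have hsq : (fib j : R) ^ 2 = (-1) ^ (j + 1) := by
      have := congrArg det hscalar
      rwa [det_pow, det_fibMatrix, det_smul, det_one, Fintype.card_fin, mul_one, eq_comm] at this
    rw [mul_comm, pow_mul, hscalar, smul_pow, one_pow, show 4 = 2 * 2 from rfl, pow_mul, hsq,
      ← pow_mul, mul_comm, pow_mul, neg_one_sq, one_pow, one_smul]

theorem three_dvd_or_three_eq_zero_of_lucas_two_mul_eq_one {m j : ℕ}
    (hL : (lucas (2 * m) : R) = 1) (hF : (fib j : R) = 0) : 3 ∣ j ∨ (3 : R) = 0 := by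
  set X := fibMatrix R ^ (2 * m)
  have hX2 : X ^ 2 = X - 1 := sq_eq_sub_one_of_trace_eq_one_of_det_eq_one
    (by rw [trace_fibMatrix_pow, hL]) (by rw [det_pow, det_fibMatrix, pow_mul]; simp)
  have hX6 : X ^ 6 = 1 := by
    have hX3 : X ^ 3 = -1 := by
      rw [pow_succ, hX2, sub_mul, ← sq, hX2, one_mul, sub_sub_cancel_left]
    rw [show 6 = 3 * 2 from rfl, pow_mul, hX3]
    simp
  have hX4j : X ^ (4 * j) = 1 := by
    rw [← pow_mul, mul_comm, pow_mul, fibMatrix_pow_four_mul_eq_one hF, one_pow]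
  refine (em (3 ∣ j)).imp id fun h3 => ?_
  have hgcd : Nat.gcd (4 * j) 6 = 2 := by
    rw [show 4 * j = 2 * (2 * j) by ring, show 6 = 2 * 3 from rfl, Nat.gcd_mul_left,
      Nat.Coprime.gcd_eq_one]
    exact Nat.coprime_comm.1 ((Nat.Prime.coprime_iff_not_dvd Nat.prime_three).2 (by omega))
  have hX : X = 1 + 1 := by
    have := hgcd ▸ pow_gcd_eq_one.2 ⟨hX4j, hX6⟩
    rwa [hX2, sub_eq_iff_eq_add] at this
  have htr := congrArg trace hX
  rw [trace_fibMatrix_pow, hL, trace_add, trace_one, Fintype.card_fin] at htr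
  linear_combination -htr

end FibMatrix

lemma not_three_dvd_sq_add_one (a : ℕ) : ¬ 3 ∣ a ^ 2 + 1 := by
  rw [← ZMod.natCast_eq_zero_iff]
  push_cast
  generalize (a : ZMod 3) = x
  revert x
  decide

lemma not_four_dvd_sq_add_one (a : ℕ) : ¬ 4 ∣ a ^ 2 + 1 := by
  rw [← ZMod.natCast_eq_zero_iff]
  push_cast
  generalize (a : ZMod 4) = x
  revert x
  decide

theorem List.prod_eq_one_or_mem_of_not_four_dvd {l : List ℕ} (h : ∀ x ∈ l, x = 1 ∨ 2 ∣ x)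
    (h4 : ¬ 4 ∣ l.prod) : l.prod = 1 ∨ l.prod ∈ l := by
  induction l with
  | nil => exact Or.inl rfl
  | cons a t ih =>
    have ih := ih (fun x hx => h x (mem_cons_of_mem a hx))
    rw [prod_cons] at h4 ⊢
    rcases h a mem_cons_self with rfl | ⟨b, rfl⟩
    · rw [one_mul] at h4 ⊢
      exact (ih h4).imp_right (mem_cons_of_mem 1)
    · have ht : t.prod = 1 := by
        rcases ih (fun h' => h4 (h'.mul_left _)) with ht | ht
        · exact ht
        · rcases h _ (mem_cons_of_mem _ ht) with ht' | ⟨c, hc⟩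
          · exact ht'
          · exact absurd ⟨b * c, by rw [hc]; ring⟩ h4
      rw [ht, mul_one]
      exact Or.inr mem_cons_self

lemma fib_prod_ne_lucas_sq_add_one {m : ℕ} (hm : Odd m) (hm3 : 3 ≤ m) (l : List ℕ) :
    (l.map fib).prod ≠ lucas m ^ 2 + 1 := by
  have hL : lucas (2 * m) = lucas m ^ 2 + 1 + 1 := by
    have := lucas_two_mul m
    rw [hm.neg_one_pow] at this
    exact_mod_cast (by linear_combination this : (lucas (2 * m) : ℤ) = lucas m ^ 2 + 1 + 1)
  intro hprod
  have hfactors : ∀ x ∈ l.map fib, x = 1 ∨ 2 ∣ x := by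
    simp only [List.mem_map]
    rintro _ ⟨n, hn, rfl⟩
    have hdvd : fib n ∣ lucas m ^ 2 + 1 := hprod ▸ List.dvd_prod (List.mem_map_of_mem hn)
    have hLmod : (lucas (2 * m) : ZMod (fib n)) = 1 := by
      rw [hL, Nat.cast_succ, (ZMod.natCast_eq_zero_iff _ _).2 hdvd, zero_add]
    rcases three_dvd_or_three_eq_zero_of_lucas_two_mul_eq_one hLmod (ZMod.natCast_self _)
      with h3 | h3
    · exact Or.inr (fib_dvd 3 n h3)
    · have : fib n ∣ 3 := (ZMod.natCast_eq_zero_iff 3 _).1 (by exact_mod_cast h3)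
      rcases (Nat.dvd_prime Nat.prime_three).1 this with h1 | h3'
      · exact Or.inl h1
      · exact absurd (h3' ▸ hdvd) (not_three_dvd_sq_add_one _)
  have hne := lucas_sub_one_ne_fib (show 4 ≤ 2 * m by omega)
  rcases List.prod_eq_one_or_mem_of_not_four_dvd hfactors (hprod ▸ not_four_dvd_sq_add_one _)
    with h1 | hmem
  · exact hne 1 (by rw [fib_one]; omega)
  · obtain ⟨k, -, hk⟩ := List.mem_map.1 hmem
    exact hne k (by omega)

theorem fib_prod_sub_one_eq_lucas_sq_iff (m : ℕ) :
    (∃ l : List ℕ, l ≠ [] ∧ l.Pairwise (· ≤ ·) ∧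
        ((l.map Nat.fib).prod : ℤ) - 1 = (lucas m : ℤ) ^ 2) ↔
      (m = 1 ∨ Even m) := by
  constructor
  · rintro ⟨l, -, -, hl⟩
    by_contra! hm
    have hodd : Odd m := Nat.not_even_iff_odd.1 hm.2
    have hm3 : 3 ≤ m := by
      obtain ⟨t, rfl⟩ := hodd
      have := hm.1
      omega
    refine fib_prod_ne_lucas_sq_add_one hodd hm3 l ?_
    exact_mod_cast (by linear_combination hl : ((l.map fib).prod : ℤ) = lucas m ^ 2 + 1)
  · rintro (rfl | ⟨_ | t, rfl⟩)
    · exact ⟨[3], by simp, by simp, by decide⟩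
    · exact ⟨[5], by simp, by simp, by decide⟩
    · have h : (lucas (2 * t + 2) ^ 2 + 1 : ℤ) = 5 * fib (2 * t + 1) * fib (2 * t + 3) := by
        exact_mod_cast lucas_sq_add_one_eq_five_mul_fib_mul_fib (n := 2 * t + 1) ⟨t, rfl⟩
      have hperm := List.mergeSort_perm [5, 2 * t + 1, 2 * t + 3] (· ≤ ·)
      refine ⟨_, ?_, List.pairwise_mergeSort' _ [5, 2 * t + 1, 2 * t + 3], ?_⟩
      · simp [← List.length_pos_iff, hperm.length_eq]
      · rw [(hperm.map fib).prod_eq, show t + 1 + (t + 1) = 2 * t + 2 by ring]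
        push_cast [List.map_cons, List.map_nil, List.prod_cons, List.prod_nil,
          show fib 5 = 5 from rfl]
        linear_combination -h
end

section
/- For a natural number m ≥ 0, there exist k ≥ 1 and natural numbers 0 ≤ n_1 ≤ n_2 ≤ ... ≤ n_k such that L_{n_1}·L_{n_2}·...·L_{n_k} + 1 = F_m^2 if and only if 3 ≤ m ≤ 7, m = 10, or m = 14. -/
/-!
By Cassini's and Catalan's identities, `F_m² - 1` is `F_{m-1} F_{m+1}` for odd `m` and
`F_{m-2} F_{m+2}` for even `m`, so a product of Lucas numbers equal to it is divisible by
`F_c` for every odd divisor `c` of `m ± 1` (resp. `m ± 2`). For odd `c`, any common divisor of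
`F_c` and `L_n` divides `gcd(F_c, F_{2n}) = F_{gcd(c, n)}`, hence `gcd(F_n, L_n)`, which divides
`2` because `L_n + F_n = 2 F_{n+1}`. So `F_c` is a power of two, and as `4 ∤ F_c` for odd `c`,
`F_c ≤ 2`, i.e. `c ≤ 3`. Requiring this of all odd divisors leaves only the listed `m`, and for
those explicit products of Lucas numbers work.
-/

open Nat

theorem lucas_add_fib (n : ℕ) : lucas n + fib n = 2 * fib (n + 1) := by
  induction n using Nat.twoStepInduction with
  | zero => rfl
  | one => rfl
  | more n ih₁ ih₂ =>
    rw [lucas, fib_add_two, show n + 2 + 1 = n + 1 + 2 from rfl, fib_add_two]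
    omega

theorem lucas_pos (n : ℕ) : 0 < lucas n := by
  have := lucas_add_fib n
  have := fib_le_fib_succ (n := n)
  have : 0 < fib (n + 1) := fib_pos.2 n.succ_pos
  omega

theorem prod_map_lucas_pos (l : List ℕ) : 0 < (l.map lucas).prod :=
  List.prod_pos fun _ hx ↦ by
    obtain ⟨n, -, rfl⟩ := List.mem_map.1 hx
    exact lucas_pos n

theorem fib_two_mul_eq_fib_mul_lucas (n : ℕ) : fib (2 * n) = fib n * lucas n := by
  rw [fib_two_mul]
  have := lucas_add_fib n
  congr 1
  omega

theorem lucas_dvd_fib_two_mul (n : ℕ) : lucas n ∣ fib (2 * n) :=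
  fib_two_mul_eq_fib_mul_lucas n ▸ dvd_mul_left _ _

theorem gcd_fib_lucas_dvd_two (n : ℕ) : Nat.gcd (fib n) (lucas n) ∣ 2 := by
  have h : Nat.gcd (fib n) (lucas n) ∣ 2 * fib (n + 1) :=
    lucas_add_fib n ▸ dvd_add (Nat.gcd_dvd_right _ _) (Nat.gcd_dvd_left _ _)
  have hcop : Coprime (Nat.gcd (fib n) (lucas n)) (fib (n + 1)) :=
    (fib_coprime_fib_succ n).coprime_dvd_left (Nat.gcd_dvd_left _ _)
  exact hcop.dvd_of_dvd_mul_right h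

theorem gcd_fib_fib_two_mul_dvd_fib {c : ℕ} (hc : Odd c) (n : ℕ) :
    Nat.gcd (fib c) (fib (2 * n)) ∣ fib n := by
  rw [← fib_gcd, Coprime.gcd_mul_left_cancel_right n (coprime_two_left.2 hc)]
  exact fib_dvd _ _ (Nat.gcd_dvd_right c n)

theorem gcd_fib_lucas_dvd_two_of_odd {c : ℕ} (hc : Odd c) (n : ℕ) :
    Nat.gcd (fib c) (lucas n) ∣ 2 := by
  have h : Nat.gcd (fib c) (lucas n) ∣ fib n :=
    (gcd_dvd_gcd_of_dvd_right _ (lucas_dvd_fib_two_mul n)).trans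
      (gcd_fib_fib_two_mul_dvd_fib hc n)
  exact (Nat.dvd_gcd h (Nat.gcd_dvd_right _ _)).trans (gcd_fib_lucas_dvd_two n)

theorem not_four_dvd_fib_of_odd {c : ℕ} (hc : Odd c) : ¬ 4 ∣ fib c := fun h ↦ by
  have : 4 ∣ fib 3 :=
    (Nat.dvd_gcd h (show 4 ∣ fib (2 * 3) from ⟨2, rfl⟩)).trans
      (gcd_fib_fib_two_mul_dvd_fib hc 3)
  exact absurd this (by decide)

theorem fib_dvd_two_of_dvd_prod_map_lucas {c : ℕ} {l : List ℕ} (hc : Odd c)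
    (h : fib c ∣ (l.map lucas).prod) : fib c ∣ 2 := by
  have hpow : fib c = 2 ^ (fib c).primeFactorsList.length := by
    refine eq_prime_pow_of_unique_prime_dvd (fib_pos.2 hc.pos).ne' fun hp hpc ↦ ?_
    obtain ⟨_, hx, hpx⟩ := hp.prime.dvd_prod_iff.1 (hpc.trans h)
    obtain ⟨n, -, rfl⟩ := List.mem_map.1 hx
    exact (prime_dvd_prime_iff_eq hp prime_two).1
      ((Nat.dvd_gcd hpc hpx).trans (gcd_fib_lucas_dvd_two_of_odd hc n))
  have h4 := not_four_dvd_fib_of_odd hc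
  rw [hpow, show 4 = 2 ^ 2 from rfl, pow_dvd_pow_iff_le_right one_lt_two] at h4
  rw [hpow]
  exact pow_one 2 ▸ pow_dvd_pow 2 (by omega)

theorem le_three_of_odd_dvd_of_fib_dvd_prod_map_lucas {c k : ℕ} {l : List ℕ} (hc : Odd c)
    (hck : c ∣ k) (h : fib k ∣ (l.map lucas).prod) : c ≤ 3 := by
  have h2 := le_of_dvd two_pos (fib_dvd_two_of_dvd_prod_map_lucas hc ((fib_dvd _ _ hck).trans h))
  by_contra! hc3
  have : fib 4 ≤ fib c := fib_mono hc3
  exact absurd (this.trans h2) (by decide)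

theorem fib_add_one_sq_sub_fib_mul_fib_add_two (n : ℕ) :
    (fib (n + 1) ^ 2 : ℤ) - fib n * fib (n + 2) = (-1) ^ n := by
  induction n with
  | zero => rfl
  | succ n ih =>
    have h₁ : (fib (n + 1 + 1) : ℤ) = fib n + fib (n + 1) := mod_cast fib_add_two
    have h₂ : (fib (n + 3) : ℤ) = fib (n + 1) + fib (n + 2) := mod_cast fib_add_two
    rw [pow_succ, h₂]
    linear_combination -ih + (fib (n + 1 + 1) : ℤ) * h₁

theorem fib_two_mul_add_one_sq (a : ℕ) :
    fib (2 * a + 1) ^ 2 = fib (2 * a) * fib (2 * a + 2) + 1 := by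
  have h := fib_add_one_sq_sub_fib_mul_fib_add_two (2 * a)
  rw [pow_mul, neg_one_sq, one_pow] at h
  zify
  linear_combination h

theorem fib_two_mul_add_two_sq (a : ℕ) :
    fib (2 * a + 2) ^ 2 = fib (2 * a) * fib (2 * a + 4) + 1 := by
  have h := fib_add_one_sq_sub_fib_mul_fib_add_two (2 * a)
  rw [pow_mul, neg_one_sq, one_pow] at h
  have h₂ : (fib (2 * a + 2) : ℤ) = fib (2 * a) + fib (2 * a + 1) := mod_cast fib_add_two
  have h₃ : (fib (2 * a + 3) : ℤ) = fib (2 * a + 1) + fib (2 * a + 2) := mod_cast fib_add_two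
  have h₄ : (fib (2 * a + 4) : ℤ) = fib (2 * a + 2) + fib (2 * a + 3) := mod_cast fib_add_two
  zify
  rw [h₄, h₃, h₂]
  linear_combination h + (fib (2 * a) : ℤ) * h₂

theorem index_bounds_of_prod_map_lucas_add_one_eq_fib_two_mul_add_one_sq {l : List ℕ} {a : ℕ}
    (h : (l.map lucas).prod + 1 = fib (2 * a + 1) ^ 2) : 1 ≤ a ∧ a ≤ 3 := by
  rw [fib_two_mul_add_one_sq, add_left_inj] at h
  have ha : a ≠ 0 := by
    rintro rfl
    simpa [h] using prod_map_lucas_pos l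
  rcases a.even_or_odd with ha' | ha'
  · have := le_three_of_odd_dvd_of_fib_dvd_prod_map_lucas ha'.add_one ⟨2, by ring⟩
      (h ▸ dvd_mul_left _ _)
    omega
  · have := le_three_of_odd_dvd_of_fib_dvd_prod_map_lucas ha' (dvd_mul_left a 2)
      (h ▸ dvd_mul_right _ _)
    omega

theorem index_eq_of_prod_map_lucas_add_one_eq_fib_two_mul_add_two_sq {l : List ℕ} {a : ℕ}
    (h : (l.map lucas).prod + 1 = fib (2 * a + 2) ^ 2) : a = 1 ∨ a = 2 ∨ a = 4 ∨ a = 6 := by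
  rw [fib_two_mul_add_two_sq, add_left_inj] at h
  have ha : a ≠ 0 := by
    rintro rfl
    simpa [h] using prod_map_lucas_pos l
  have h₁ {c : ℕ} (hc : Odd c) (hca : c ∣ 2 * a) : c ≤ 3 :=
    le_three_of_odd_dvd_of_fib_dvd_prod_map_lucas hc hca (h ▸ dvd_mul_right _ _)
  have h₂ {c : ℕ} (hc : Odd c) (hca : c ∣ 2 * a + 4) : c ≤ 3 :=
    le_three_of_odd_dvd_of_fib_dvd_prod_map_lucas hc hca (h ▸ dvd_mul_left _ _)
  rcases a.even_or_odd with ⟨b, rfl⟩ | ha'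
  · rcases b.even_or_odd with hb | hb
    · have := h₂ hb.add_one ⟨4, by ring⟩
      obtain ⟨k, rfl⟩ := hb
      omega
    · have := h₁ hb ⟨4, by ring⟩
      obtain ⟨k, rfl⟩ := hb
      omega
  · have := h₂ (ha'.add_even even_two) ⟨2, by ring⟩
    omega

theorem lucas_prod_add_one_eq_fib_sq_iff (m : ℕ) :
    (∃ l : List ℕ, l ≠ [] ∧ l.Pairwise (· ≤ ·) ∧
        (l.map lucas).prod + 1 = Nat.fib m ^ 2) ↔
      ((3 ≤ m ∧ m ≤ 7) ∨ m = 10 ∨ m = 14) := by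
  constructor
  · rintro ⟨l, -, -, h⟩
    obtain ⟨a, rfl | rfl⟩ := m.even_or_odd'
    · rcases a with _ | a
      · simp at h
      · have := index_eq_of_prod_map_lucas_add_one_eq_fib_two_mul_add_two_sq h
        omega
    · have := index_bounds_of_prod_map_lucas_add_one_eq_fib_two_mul_add_one_sq h
      omega
  · rintro (⟨h3, h7⟩ | rfl | rfl)
    · interval_cases m
      · exact ⟨[2], by simp, by decide, by decide⟩
      · exact ⟨[0, 0, 0], by simp, by decide, by decide⟩
      · exact ⟨[0, 2, 3], by simp, by decide, by decide⟩
      · exact ⟨[2, 2, 4], by simp, by decide, by decide⟩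
      · exact ⟨[0, 0, 0, 2, 4], by simp, by decide, by decide⟩
    · exact ⟨[0, 0, 0, 0, 2, 2, 2, 4], by simp, by decide, by decide⟩
    · exact ⟨[0, 0, 0, 0, 2, 2, 2, 4, 8], by simp, by decide, by decide⟩
end
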